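/- Let m ≥ 2 be an even natural number. For each integer 0 ≤ j ≤ m/2 - 1, the expression A(j) = (-1)^j · [C(m-1, 2j) + ∑_{k=0}^{j-1} (C(m-1, 2k)·C(m-1, 2j-2k) − C(m-1, 2k+1)·C(m-1, 2j-2k-1))] equals C(m-1, j). -/

import Mathlib

/-!
Comparing coefficients of `X ^ (2j)` in `(1 - X) ^ n * (1 + X) ^ n = (1 - X ^ 2) ^ n` gives
`∑_{i ≤ 2j} (-1)^i C(n,i) C(n,2j-i) = (-1)^j C(n,j)`; grouping the terms `i = 2k, 2k + 1`
of the left-hand side and isolating `i = 2j` yields the bracket of the theorem (with `n = m - 1`).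
-/

open Polynomial Finset

theorem Polynomial.coeff_one_sub_X_pow {R : Type*} [CommRing R] (n i : ℕ) :
    ((1 - X : R[X]) ^ n).coeff i = (-1) ^ i * n.choose i := by
  have hterm : ∀ k, (-X : R[X]) ^ k * 1 ^ (n - k) * (n.choose k : R[X]) =
      C ((-1) ^ k * (n.choose k : R)) * X ^ k := by
    intro k
    rw [neg_pow, one_pow, mul_one, C_mul, C_pow, C_neg, C_1, map_natCast]
    ring
  rw [sub_eq_neg_add, add_pow, finsetSum_coeff]
  simp only [hterm, coeff_C_mul_X_pow]
  rw [sum_ite_eq]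
  split_ifs with hi
  · rfl
  · simp [Nat.choose_eq_zero_of_lt (by simpa using hi)]

theorem Polynomial.coeff_one_sub_X_sq_pow_two_mul {R : Type*} [CommRing R] (n j : ℕ) :
    ((1 - X ^ 2 : R[X]) ^ n).coeff (2 * j) = (-1) ^ j * n.choose j := by
  have h : (1 - X ^ 2 : R[X]) ^ n = expand R 2 ((1 - X) ^ n) := by simp
  rw [h, coeff_expand two_pos, if_pos (dvd_mul_right 2 j), Nat.mul_div_cancel_left j two_pos,
    coeff_one_sub_X_pow]

theorem sum_range_neg_one_pow_mul_choose_mul_choose {R : Type*} [CommRing R] (n j : ℕ) :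
    ∑ i ∈ range (2 * j + 1), (-1 : R) ^ i * n.choose i * n.choose (2 * j - i) =
      (-1) ^ j * n.choose j := by
  rw [← coeff_one_sub_X_sq_pow_two_mul, show (1 - X ^ 2 : R[X]) = (1 - X) * (1 + X) by ring,
    mul_pow, coeff_mul, Nat.sum_antidiagonal_eq_sum_range_succ_mk]
  simp only [coeff_one_sub_X_pow, coeff_one_add_X_pow]

theorem Finset.sum_range_two_mul {M : Type*} [AddCommMonoid M] (f : ℕ → M) (j : ℕ) :
    ∑ i ∈ range (2 * j), f i = ∑ k ∈ range j, (f (2 * k) + f (2 * k + 1)) := by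
  induction j with
  | zero => simp
  | succ j ih =>
    rw [Nat.mul_succ, sum_range_succ, sum_range_succ, sum_range_succ, ih, add_assoc]

theorem stmt_7_general (m : ℕ) (j : ℕ) :
    (-1 : ℤ) ^ j *
      (((m - 1).choose (2 * j) : ℤ) +
        ∑ k ∈ Finset.range j,
          (((m - 1).choose (2 * k) : ℤ) * ((m - 1).choose (2 * j - 2 * k)) -
            ((m - 1).choose (2 * k + 1) : ℤ) * ((m - 1).choose (2 * j - 2 * k - 1)))) =
    ((m - 1).choose j : ℤ) := by
  set n := m - 1
  have hpair : ∀ k, (-1 : ℤ) ^ (2 * k) * n.choose (2 * k) * n.choose (2 * j - 2 * k) +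
      (-1) ^ (2 * k + 1) * n.choose (2 * k + 1) * n.choose (2 * j - (2 * k + 1)) =
      n.choose (2 * k) * n.choose (2 * j - 2 * k) -
        n.choose (2 * k + 1) * n.choose (2 * j - 2 * k - 1) := by
    intro k
    rw [pow_succ, pow_mul, neg_one_sq, one_pow, Nat.sub_sub]
    ring
  have hsum := sum_range_neg_one_pow_mul_choose_mul_choose (R := ℤ) n j
  rw [sum_range_succ, sum_range_two_mul, sum_congr rfl fun k _ => hpair k, Nat.sub_self,
    Nat.choose_zero_right, pow_mul, neg_one_sq, one_pow] at hsum
  have hsq : ((-1 : ℤ) ^ j) ^ 2 = 1 := by rw [← pow_mul, mul_comm, pow_mul, neg_one_sq, one_pow]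
  linear_combination (-1 : ℤ) ^ j * hsum + (n.choose j : ℤ) * hsq

theorem stmt_7 (m : ℕ) (hm : 2 ≤ m) (hme : Even m) (j : ℕ) (hj : j ≤ m / 2 - 1) :
    (-1 : ℤ) ^ j *
      (((m - 1).choose (2 * j) : ℤ) +
        ∑ k ∈ Finset.range j,
          (((m - 1).choose (2 * k) : ℤ) * ((m - 1).choose (2 * j - 2 * k)) -
            ((m - 1).choose (2 * k + 1) : ℤ) * ((m - 1).choose (2 * j - 2 * k - 1)))) =
    ((m - 1).choose j : ℤ) :=
  stmt_7_general m j
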